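/- With the continued-fraction data below, let r > 0 be a real number, and for 1 ≤ i ≤ k−1 and real x define x′_i(x) = (−1)^{k−i} c_{i−1} ( x/q − (−1)^k ∑_{j=i}^{k−1} π/(c_{j−1} c_j) ). Then for every real x with −π + qπ/r < x < π − qπ/r and every i ∈ {1,…,k−1}, one has |x′_i(x)| ≤ π − c_{i−1}π/r; in particular −π + π/r ≤ x′_i(x) ≤ π − π/r. -/

import Mathlib

/-!
Because every `a i ≥ 2`, the differences `c (j + 1) - c j` never decrease, so starting from
`c 1 - c 0 = a 1 - 1 ≥ 1` the `c j` are positive and grow by at least `1` at each step. Hence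
`π / (c (j-1) c j) ≤ π / c (j-1) - π / c j`, and the sum in `x′_i` telescopes to at most
`π / c (i-1) - π / q`. The triangle inequality gives
`|x′_i| ≤ c (i-1) (|x| / q + π / c (i-1) - π / q)`, and `|x| ≤ π - qπ/r` turns the
right-hand side into exactly `π - c (i-1) π / r`.
-/

open Real

/-- The critical point function
`x′_i(x) = (−1)^{k−i} c_{i−1} (x/q − (−1)^k ∑_{j=i}^{k−1} π/(c_{j−1} c_j))`. -/
noncomputable def xcrit' (c : ℕ → ℤ) (q : ℤ) (k i : ℕ) (x : ℝ) : ℝ :=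
  (-1 : ℝ) ^ (k - i) * (c (i - 1) : ℝ) *
    (x / (q : ℝ) - (-1 : ℝ) ^ k *
      ∑ j ∈ Finset.Icc i (k - 1), π / ((c (j - 1) : ℝ) * (c j : ℝ)))

section Continuant

variable {n : ℕ} {a c : ℕ → ℤ}

theorem one_le_and_add_one_le_succ_of_continuant (ha : ∀ i, 1 ≤ i → i ≤ n → 2 ≤ a i)
    (hc0 : c 0 = 1) (hc1 : c 1 = a 1)
    (hcrec : ∀ i, 2 ≤ i → i ≤ n → c i = a i * c (i - 1) - c (i - 2)) :
    ∀ j, j < n → 1 ≤ c j ∧ c j + 1 ≤ c (j + 1)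
  | 0, hn => by
    have := ha 1 le_rfl hn
    show 1 ≤ c 0 ∧ c 0 + 1 ≤ c 1
    omega
  | j + 1, hn => by
    obtain ⟨hpos, hstep⟩ :=
      one_le_and_add_one_le_succ_of_continuant ha hc0 hc1 hcrec j (by omega)
    have hrec : c (j + 2) = a (j + 2) * c (j + 1) - c j := hcrec (j + 2) (by omega) hn
    have := ha (j + 2) (by omega) hn
    exact ⟨by omega, by nlinarith⟩

theorem one_le_of_continuant (ha : ∀ i, 1 ≤ i → i ≤ n → 2 ≤ a i)
    (hc0 : c 0 = 1) (hc1 : c 1 = a 1)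
    (hcrec : ∀ i, 2 ≤ i → i ≤ n → c i = a i * c (i - 1) - c (i - 2)) :
    ∀ j, j ≤ n → 1 ≤ c j
  | 0, _ => hc0.ge
  | j + 1, hj => by
    have := one_le_and_add_one_le_succ_of_continuant ha hc0 hc1 hcrec j hj
    omega

end Continuant

theorem div_mul_le_div_sub_div {t u v : ℝ} (ht : 0 ≤ t) (hu : 0 < u) (huv : u + 1 ≤ v) :
    t / (u * v) ≤ t / u - t / v := by
  have hv : 0 < v := by linarith
  rw [div_sub_div _ _ hu.ne' hv.ne', div_le_div_iff_of_pos_right (by positivity)]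
  nlinarith

theorem sum_Icc_sub_one_eq_sum_Ico {M : Type*} [AddCommMonoid M] (f : ℕ → ℕ → M)
    (m n : ℕ) :
    ∑ j ∈ Finset.Icc (m + 1) n, f (j - 1) j = ∑ j ∈ Finset.Ico m n, f j (j + 1) := by
  rw [← Finset.Ico_add_one_right_eq_Icc, ← Finset.sum_Ico_add' (fun j => f (j - 1) j)]
  simp only [Nat.add_sub_cancel]

section Telescoping

variable {b : ℕ → ℝ} {t : ℝ} {m n : ℕ}

theorem sum_Ico_div_mul_nonneg (ht : 0 ≤ t)
    (hb : ∀ j, m ≤ j → j < n → 0 < b j ∧ b j + 1 ≤ b (j + 1)) :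
    0 ≤ ∑ j ∈ Finset.Ico m n, t / (b j * b (j + 1)) := by
  refine Finset.sum_nonneg fun j hj => ?_
  obtain ⟨hj, hjj⟩ := hb j (Finset.mem_Ico.1 hj).1 (Finset.mem_Ico.1 hj).2
  have : 0 < b (j + 1) := by linarith
  positivity

theorem sum_Ico_div_mul_le (ht : 0 ≤ t) (hmn : m ≤ n)
    (hb : ∀ j, m ≤ j → j < n → 0 < b j ∧ b j + 1 ≤ b (j + 1)) :
    ∑ j ∈ Finset.Ico m n, t / (b j * b (j + 1)) ≤ t / b m - t / b n :=
  calc ∑ j ∈ Finset.Ico m n, t / (b j * b (j + 1))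
      ≤ ∑ j ∈ Finset.Ico m n, (-(t / b (j + 1)) - -(t / b j)) :=
        Finset.sum_le_sum fun j hj => by
          obtain ⟨hj, hjj⟩ := hb j (Finset.mem_Ico.1 hj).1 (Finset.mem_Ico.1 hj).2
          linarith [div_mul_le_div_sub_div ht hj hjj]
    _ = t / b m - t / b n := by
        rw [Finset.sum_Ico_sub (fun j => -(t / b j)) hmn]
        ring

end Telescoping

theorem abs_xcrit'_le (c : ℕ → ℤ) {q : ℤ} (k i : ℕ) (x : ℝ) (hq : (0 : ℝ) < q)
    (hS : 0 ≤ ∑ j ∈ Finset.Icc i (k - 1), π / ((c (j - 1) : ℝ) * c j)) :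
    |xcrit' c q k i x| ≤ |(c (i - 1) : ℝ)| *
      (|x| / q + ∑ j ∈ Finset.Icc i (k - 1), π / ((c (j - 1) : ℝ) * c j)) := by
  simp only [xcrit', abs_mul, abs_pow, abs_neg, abs_one, one_pow, one_mul]
  gcongr
  refine (abs_sub _ _).trans_eq ?_
  rw [abs_div, abs_of_pos hq, abs_mul, abs_pow, abs_neg, abs_one, one_pow, one_mul,
    abs_of_nonneg hS]

theorem xcrit'_bound_general (k : ℕ) (a c : ℕ → ℤ)
    (ha : ∀ i, 1 ≤ i → i ≤ k - 1 → 2 ≤ a i)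
    (hc0 : c 0 = 1) (hc1 : c 1 = a 1)
    (hcrec : ∀ i, 2 ≤ i → i ≤ k - 1 → c i = a i * c (i - 1) - c (i - 2))
    (q : ℤ) (hq : q = c (k - 1))
    (r : ℝ) (hr : 0 < r) (x : ℝ)
    (hx1 : -π + (q : ℝ) * π / r < x) (hx2 : x < π - (q : ℝ) * π / r)
    (i : ℕ) (hi1 : 1 ≤ i) (hi2 : i ≤ k - 1) :
    |xcrit' c q k i x| ≤ π - (c (i - 1) : ℝ) * π / r ∧
      -π + π / r ≤ xcrit' c q k i x ∧ xcrit' c q k i x ≤ π - π / r := by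
  obtain ⟨m, rfl⟩ : ∃ m, i = m + 1 := ⟨i - 1, by omega⟩
  have hb (j : ℕ) (_ : m ≤ j) (hj : j < k - 1) :
      0 < (c j : ℝ) ∧ (c j : ℝ) + 1 ≤ c (j + 1) := by
    obtain ⟨hpos, hstep⟩ := one_le_and_add_one_le_succ_of_continuant ha hc0 hc1 hcrec j hj
    exact ⟨by exact_mod_cast hpos, by exact_mod_cast hstep⟩
  have hC : (1 : ℝ) ≤ c m := by
    exact_mod_cast one_le_of_continuant ha hc0 hc1 hcrec m (by omega)
  have hQ : (0 : ℝ) < q := by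
    rw [hq]; exact_mod_cast one_le_of_continuant ha hc0 hc1 hcrec (k - 1) le_rfl
  have hS := sum_Icc_sub_one_eq_sum_Ico (fun u v => π / ((c u : ℝ) * c v)) m (k - 1)
  have hS0 := hS ▸ sum_Ico_div_mul_nonneg pi_pos.le hb
  have hSle := hS ▸ sum_Ico_div_mul_le pi_pos.le (by omega) hb
  have hx : |x| ≤ π - q * π / r := abs_le.2 ⟨by linarith, hx2.le⟩
  simp only [Nat.add_sub_cancel]
  have hbound : |xcrit' c q k (m + 1) x| ≤ π - c m * π / r := by
    refine (abs_xcrit'_le c k (m + 1) x hQ hS0).trans ?_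
    rw [Nat.add_sub_cancel, abs_of_pos (by linarith)]
    calc _ ≤ c m * ((π - q * π / r) / q + (π / c m - π / q)) := by rw [← hq] at hSle; gcongr
      _ = π - c m * π / r := by field_simp; ring
  have hπr : π / r ≤ c m * π / r := by
    rw [mul_div_assoc]
    exact le_mul_of_one_le_left (by positivity) hC
  exact ⟨hbound, by linarith [(abs_le.1 hbound).1], by linarith [(abs_le.1 hbound).2]⟩

/-- **Lemma 4.7 of the paper.** With the continued-fraction data, for `r > 0`,
`−π + qπ/r < x < π − qπ/r` and `1 ≤ i ≤ k−1`, one has `|x′_i(x)| ≤ π − c_{i−1}π/r`;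
in particular `−π + π/r ≤ x′_i(x) ≤ π − π/r`. -/
theorem xcrit'_bound (k : ℕ) (hk : 2 ≤ k) (a c : ℕ → ℤ)
    (ha : ∀ i, 1 ≤ i → i ≤ k - 1 → 2 ≤ a i)
    (hc0 : c 0 = 1) (hc1 : c 1 = a 1)
    (hcrec : ∀ i, 2 ≤ i → i ≤ k - 1 → c i = a i * c (i - 1) - c (i - 2))
    (q : ℤ) (hq : q = c (k - 1))
    (r : ℝ) (hr : 0 < r) (x : ℝ)
    (hx1 : -π + (q : ℝ) * π / r < x) (hx2 : x < π - (q : ℝ) * π / r)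
    (i : ℕ) (hi1 : 1 ≤ i) (hi2 : i ≤ k - 1) :
    |xcrit' c q k i x| ≤ π - (c (i - 1) : ℝ) * π / r ∧
      -π + π / r ≤ xcrit' c q k i x ∧ xcrit' c q k i x ≤ π - π / r :=
  xcrit'_bound_general k a c ha hc0 hc1 hcrec q hq r hr x hx1 hx2 i hi1 hi2
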